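/- Let Ξ ⊆ A^{ℤ²} be a subshift whose shift action is minimal and uniquely ergodic, and suppose Ξ admits both a horizontal shear and a vertical shear. Then the set of topological eigenvalues of the shift action on Ξ is precisely ℤ × ℤ ⊆ ℝ²: every λ ∈ ℤ² is a topological eigenvalue (with constant eigenfunction), and every topological eigenvalue λ ∈ ℝ² lies in ℤ². -/

import Mathlib

open MeasureTheory

/-- The shift `ℤ²`-action on the full shift `A^{ℤ²}`: `(φⁿ u)(m) = u(m+n)`. -/
def shift2 {A : Type*} (n : ℤ × ℤ) (u : ℤ × ℤ → A) : ℤ × ℤ → A := fun m => u (m + n)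

section Defs

variable {A : Type*} [TopologicalSpace A]

/-- A subshift: a nonempty, closed, shift-invariant subset of the full shift. -/
def IsSubshift (Ξ : Set (ℤ × ℤ → A)) : Prop :=
  Ξ.Nonempty ∧ IsClosed Ξ ∧ ∀ (n : ℤ × ℤ), ∀ u ∈ Ξ, shift2 n u ∈ Ξ

/-- Minimality: every orbit is dense in the subshift. -/
def IsMinimalSubshift (Ξ : Set (ℤ × ℤ → A)) : Prop :=
  ∀ u ∈ Ξ, Ξ ⊆ closure {v | ∃ n : ℤ × ℤ, v = shift2 n u}

/-- Freeness: the shift action is free on the subshift. -/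
def IsFreeSubshift (Ξ : Set (ℤ × ℤ → A)) : Prop :=
  ∀ u ∈ Ξ, ∀ n : ℤ × ℤ, shift2 n u = u → n = 0

/-- A continuous `ℤ`-valued cocycle on the subshift `Ξ`: continuous in the first
variable, and satisfying `θ(u, n+m) = θ(u, n) + θ(φⁿ u, m)` on `Ξ`. -/
def IsContinuousCocycle (Ξ : Set (ℤ × ℤ → A)) (θ : (ℤ × ℤ → A) → ℤ × ℤ → ℤ) : Prop :=
  (∀ n : ℤ × ℤ, ContinuousOn (fun u => θ u n) Ξ) ∧
  (∀ u ∈ Ξ, ∀ n m : ℤ × ℤ, θ u (n + m) = θ u n + θ (shift2 n u) m)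

variable [MeasurableSpace A]

/-- A shift-invariant Borel probability measure on the subshift `Ξ`, encoded as a
probability measure on the full shift giving `Ξ` full measure. -/
def IsInvariantProb (Ξ : Set (ℤ × ℤ → A)) (μ : Measure (ℤ × ℤ → A)) : Prop :=
  IsProbabilityMeasure μ ∧ μ Ξᶜ = 0 ∧ ∀ n : ℤ × ℤ, μ.map (shift2 n) = μ

end Defs

/-- Horizontal shear: there are `u ∈ Ξ` and `N, N' : ℤ` such that for every `n : ℤ`
there is `v ∈ Ξ` agreeing with `u` on `ℤ × N₊` and with `φ^{(n,0)} u` on `ℤ × N'₋`. -/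
def AdmitsHorizontalShear {A : Type*} [TopologicalSpace A] (Ξ : Set (ℤ × ℤ → A)) : Prop :=
  ∃ u ∈ Ξ, ∃ N N' : ℤ, ∀ n : ℤ, ∃ v ∈ Ξ,
    (∀ m : ℤ × ℤ, N < m.2 → v m = u m) ∧
    (∀ m : ℤ × ℤ, m.2 < N' → v m = shift2 (n, 0) u m)

/-- Vertical shear: there are `u ∈ Ξ` and `N, N' : ℤ` such that for every `n : ℤ`
there is `v ∈ Ξ` agreeing with `u` on `N₊ × ℤ` and with `φ^{(0,n)} u` on `N'₋ × ℤ`. -/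
def AdmitsVerticalShear {A : Type*} [TopologicalSpace A] (Ξ : Set (ℤ × ℤ → A)) : Prop :=
  ∃ u ∈ Ξ, ∃ N N' : ℤ, ∀ n : ℤ, ∃ v ∈ Ξ,
    (∀ m : ℤ × ℤ, N < m.1 → v m = u m) ∧
    (∀ m : ℤ × ℤ, m.1 < N' → v m = shift2 (0, n) u m)

/-- `λ = (λ₁, λ₂) ∈ ℝ²` is a topological eigenvalue of the shift action on `Ξ`:
there is a continuous `ψ : Ξ → ℂ` of modulus one with
`ψ(φⁿ u) = exp(2πi (λ₁ n₁ + λ₂ n₂)) ψ(u)`. -/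
def IsTopologicalEigenvalue {A : Type*} [TopologicalSpace A] (Ξ : Set (ℤ × ℤ → A))
    (lam : ℝ × ℝ) : Prop :=
  ∃ ψ : (ℤ × ℤ → A) → ℂ, ContinuousOn ψ Ξ ∧ (∀ u ∈ Ξ, ‖ψ u‖ = 1) ∧
    ∀ u ∈ Ξ, ∀ n : ℤ × ℤ,
      ψ (shift2 n u) =
        Complex.exp (2 * Real.pi * Complex.I *
          ((lam.1 * (n.1 : ℝ) + lam.2 * (n.2 : ℝ) : ℝ) : ℂ)) * ψ u

/-! A continuous eigenfunction `ψ` takes the same value on two configurations `v, w` that agree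
far out in some direction `e`: shifting both by `M e` makes them agree on any finite window, so
by compactness `ψ (φ^{Me} v) - ψ (φ^{Me} w)` has `0` as a cluster value, while the eigenvalue
equation keeps its modulus equal to `‖ψ v - ψ w‖`. The configuration provided by a horizontal
shear agrees with `u` far above and with `φ^{(1,0)} u` far below, hence
`ψ u = ψ (φ^{(1,0)} u) = exp (2πi λ₁) ψ u` and `λ₁ ∈ ℤ`; a vertical shear gives `λ₂ ∈ ℤ`. -/

open Filter Topology

theorem IsCompact.mapClusterPt_zero_sub {ι A E : Type*} [TopologicalSpace A] [T2Space A]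
    [TopologicalSpace E] [AddGroup E] [ContinuousSub E] {K : Set (ι → A)} (hK : IsCompact K)
    {f : (ι → A) → E} (hf : ContinuousOn f K) {x y : ℕ → ι → A} (hx : ∀ M, x M ∈ K)
    (hy : ∀ M, y M ∈ K) (hxy : ∀ i, ∀ᶠ M in atTop, x M i = y M i) :
    MapClusterPt 0 atTop (fun M => f (x M) - f (y M)) := by
  have hxyK : Tendsto (fun M => (x M, y M)) atTop (𝓟 (K ×ˢ K)) :=
    tendsto_principal.2 (Eventually.of_forall fun M => ⟨hx M, hy M⟩)
  obtain ⟨p, hpK, hp⟩ := (hK.prod hK).exists_mapClusterPt hxyK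
  have hdiag : p.1 = p.2 := funext fun i =>
    (isClosed_eq ((continuous_apply i).comp continuous_fst)
      ((continuous_apply i).comp continuous_snd)).mem_of_mapClusterPt hp (hxy i)
  have hg : ContinuousOn (fun q : (ι → A) × (ι → A) => f q.1 - f q.2) (K ×ˢ K) :=
    (hf.comp continuous_fst.continuousOn fun _ hq => hq.1).sub
      (hf.comp continuous_snd.continuousOn fun _ hq => hq.2)
  have hlim := (hg p hpK).tendsto.mono_left (inf_le_inf_left _ hxyK)
  rw [hdiag, sub_self] at hlim
  exact hp.tendsto_comp' hlim

section Asymptotic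

variable {A : Type*}

def AsymptoticAlong (e : ℤ × ℤ) (v w : ℤ × ℤ → A) : Prop :=
  ∀ m : ℤ × ℤ, ∀ᶠ M : ℕ in atTop, v (m + (M : ℤ) • e) = w (m + (M : ℤ) • e)

theorem AsymptoticAlong.of_lt {e : ℤ × ℤ} {v w : ℤ × ℤ → A} (L : ℤ × ℤ →+ ℤ) (he : 0 < L e)
    (N : ℤ) (h : ∀ m, N < L m → v m = w m) : AsymptoticAlong e v w := by
  intro m
  filter_upwards [(tendsto_natCast_atTop_atTop (R := ℤ)).eventually_gt_atTop (N - L m)]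
    with M hM
  apply h
  rw [map_add, map_zsmul, smul_eq_mul]
  nlinarith

end Asymptotic

noncomputable def shiftCharacter (lam : ℝ × ℝ) (n : ℤ × ℤ) : ℂ :=
  Complex.exp (2 * Real.pi * Complex.I * ((lam.1 * (n.1 : ℝ) + lam.2 * (n.2 : ℝ) : ℝ) : ℂ))

theorem norm_shiftCharacter (lam : ℝ × ℝ) (n : ℤ × ℤ) : ‖shiftCharacter lam n‖ = 1 := by
  simp [shiftCharacter, Complex.norm_exp]

theorem shiftCharacter_eq_one_iff {lam : ℝ × ℝ} {n : ℤ × ℤ} :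
    shiftCharacter lam n = 1 ↔ ∃ k : ℤ, lam.1 * n.1 + lam.2 * n.2 = k := by
  have h2piI : 2 * (Real.pi : ℂ) * Complex.I ≠ 0 := by simp [Real.pi_ne_zero]
  simp only [shiftCharacter, Complex.exp_eq_one_iff, mul_comm _ (2 * (Real.pi : ℂ) * Complex.I),
    mul_right_inj' h2piI]
  exact exists_congr fun k => by exact_mod_cast Iff.rfl

section Eigenfunction

variable {A : Type*} [TopologicalSpace A]

def IsEigenfunction (Ξ : Set (ℤ × ℤ → A)) (lam : ℝ × ℝ) (ψ : (ℤ × ℤ → A) → ℂ) : Prop :=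
  ContinuousOn ψ Ξ ∧ (∀ u ∈ Ξ, ‖ψ u‖ = 1) ∧
    ∀ u ∈ Ξ, ∀ n : ℤ × ℤ, ψ (shift2 n u) = shiftCharacter lam n * ψ u

theorem isTopologicalEigenvalue_iff {Ξ : Set (ℤ × ℤ → A)} {lam : ℝ × ℝ} :
    IsTopologicalEigenvalue Ξ lam ↔ ∃ ψ, IsEigenfunction Ξ lam ψ :=
  Iff.rfl

theorem isTopologicalEigenvalue_intCast (Ξ : Set (ℤ × ℤ → A)) (a : ℤ × ℤ) :
    IsTopologicalEigenvalue Ξ ((a.1 : ℝ), (a.2 : ℝ)) := by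
  refine isTopologicalEigenvalue_iff.2
    ⟨fun _ => 1, continuousOn_const, fun _ _ => norm_one, fun _ _ n => ?_⟩
  rw [mul_one, eq_comm, shiftCharacter_eq_one_iff]
  exact ⟨a.1 * n.1 + a.2 * n.2, by push_cast; ring⟩

variable [CompactSpace A] [T2Space A] {Ξ : Set (ℤ × ℤ → A)} {lam : ℝ × ℝ}
  {ψ : (ℤ × ℤ → A) → ℂ}

theorem IsEigenfunction.eq_of_asymptoticAlong (hψ : IsEigenfunction Ξ lam ψ)
    (hΞ : IsSubshift Ξ) {e : ℤ × ℤ} {v w : ℤ × ℤ → A} (hv : v ∈ Ξ) (hw : w ∈ Ξ)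
    (hvw : AsymptoticAlong e v w) : ψ v = ψ w := by
  obtain ⟨-, hclosed, hinv⟩ := hΞ
  have hcluster := (hclosed.isCompact.mapClusterPt_zero_sub hψ.1
    (x := fun M : ℕ => shift2 ((M : ℤ) • e) v) (y := fun M : ℕ => shift2 ((M : ℤ) • e) w)
    (fun _ => hinv _ _ hv) (fun _ => hinv _ _ hw) hvw).tendsto_comp
    (continuous_norm.tendsto 0)
  have hconst : (fun z : ℂ => ‖z‖) ∘ (fun M : ℕ => ψ (shift2 ((M : ℤ) • e) v) -
      ψ (shift2 ((M : ℤ) • e) w)) = fun _ => ‖ψ v - ψ w‖ := by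
    funext M
    simp only [Function.comp_apply, hψ.2.2 v hv, hψ.2.2 w hw, ← mul_sub, norm_mul,
      norm_shiftCharacter, one_mul]
  rw [hconst, norm_zero] at hcluster
  have hzero : (0 : ℝ) = ‖ψ v - ψ w‖ :=
    isClosed_singleton.mem_of_mapClusterPt hcluster (Eventually.of_forall fun _ => rfl)
  rwa [eq_comm, norm_eq_zero, sub_eq_zero] at hzero

theorem IsEigenfunction.shiftCharacter_eq_one (hψ : IsEigenfunction Ξ lam ψ)
    (hΞ : IsSubshift Ξ) {e e' n : ℤ × ℤ} {u v : ℤ × ℤ → A} (hu : u ∈ Ξ) (hv : v ∈ Ξ)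
    (hvu : AsymptoticAlong e v u) (hvu' : AsymptoticAlong e' v (shift2 n u)) :
    shiftCharacter lam n = 1 := by
  have hshift : ψ (shift2 n u) = ψ u :=
    (hψ.eq_of_asymptoticAlong hΞ hv (hΞ.2.2 n u hu) hvu').symm.trans
      (hψ.eq_of_asymptoticAlong hΞ hv hu hvu)
  have hne : ψ u ≠ 0 := norm_ne_zero_iff.1 (by rw [hψ.2.1 u hu]; exact one_ne_zero)
  rw [hψ.2.2 u hu n] at hshift
  exact (mul_eq_right₀ hne).1 hshift

theorem AdmitsHorizontalShear.shiftCharacter_eq_one (hH : AdmitsHorizontalShear Ξ)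
    (hΞ : IsSubshift Ξ) (hψ : IsEigenfunction Ξ lam ψ) (n : ℤ) :
    shiftCharacter lam (n, 0) = 1 := by
  obtain ⟨u, hu, N, N', hshear⟩ := hH
  obtain ⟨v, hv, hupper, hlower⟩ := hshear n
  exact hψ.shiftCharacter_eq_one hΞ hu hv
    (.of_lt (e := (0, 1)) (AddMonoidHom.snd ℤ ℤ) one_pos N hupper)
    (.of_lt (e := (0, -1)) (-AddMonoidHom.snd ℤ ℤ) one_pos (-N')
      fun m hm => hlower m (by simpa using hm))

theorem AdmitsVerticalShear.shiftCharacter_eq_one (hV : AdmitsVerticalShear Ξ)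
    (hΞ : IsSubshift Ξ) (hψ : IsEigenfunction Ξ lam ψ) (n : ℤ) :
    shiftCharacter lam (0, n) = 1 := by
  obtain ⟨u, hu, N, N', hshear⟩ := hV
  obtain ⟨v, hv, hright, hleft⟩ := hshear n
  exact hψ.shiftCharacter_eq_one hΞ hu hv
    (.of_lt (e := (1, 0)) (AddMonoidHom.fst ℤ ℤ) one_pos N hright)
    (.of_lt (e := (-1, 0)) (-AddMonoidHom.fst ℤ ℤ) one_pos (-N')
      fun m hm => hleft m (by simpa using hm))

end Eigenfunction

theorem statement6_general {A : Type} [Fintype A]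
    [TopologicalSpace A] [DiscreteTopology A]
    (Ξ : Set (ℤ × ℤ → A)) (hsub : IsSubshift Ξ)
    (hH : AdmitsHorizontalShear Ξ) (hV : AdmitsVerticalShear Ξ) :
    (∀ a : ℤ × ℤ, IsTopologicalEigenvalue Ξ ((a.1 : ℝ), (a.2 : ℝ))) ∧
    (∀ lam : ℝ × ℝ, IsTopologicalEigenvalue Ξ lam →
      ∃ j k : ℤ, lam = ((j : ℝ), (k : ℝ))) := by
  refine ⟨isTopologicalEigenvalue_intCast Ξ, fun lam hlam => ?_⟩
  obtain ⟨ψ, hψ⟩ := isTopologicalEigenvalue_iff.1 hlam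
  obtain ⟨j, hj⟩ := shiftCharacter_eq_one_iff.1 (hH.shiftCharacter_eq_one hsub hψ 1)
  obtain ⟨k, hk⟩ := shiftCharacter_eq_one_iff.1 (hV.shiftCharacter_eq_one hsub hψ 1)
  simp only [Int.cast_one, Int.cast_zero, mul_one, mul_zero, add_zero, zero_add] at hj hk
  exact ⟨j, k, Prod.ext hj hk⟩

/-- In a minimal, uniquely ergodic `ℤ²` subshift admitting shears in both coordinate
directions, the set of topological eigenvalues is precisely `ℤ × ℤ ⊆ ℝ²`. -/
theorem statement6 {A : Type} [Fintype A] [Nonempty A]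
    [TopologicalSpace A] [DiscreteTopology A] [MeasurableSpace A] [BorelSpace A]
    (Ξ : Set (ℤ × ℤ → A)) (hsub : IsSubshift Ξ) (hmin : IsMinimalSubshift Ξ)
    (huerg : ∃! μ : Measure (ℤ × ℤ → A), IsInvariantProb Ξ μ)
    (hH : AdmitsHorizontalShear Ξ) (hV : AdmitsVerticalShear Ξ) :
    (∀ a : ℤ × ℤ, IsTopologicalEigenvalue Ξ ((a.1 : ℝ), (a.2 : ℝ))) ∧
    (∀ lam : ℝ × ℝ, IsTopologicalEigenvalue Ξ lam →
      ∃ j k : ℤ, lam = ((j : ℝ), (k : ℝ))) :=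
  statement6_general Ξ hsub hH hV
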